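/- For μ ∈ 𝒫(X) and x ∈ X define q_x^μ : A → ℝ by q_x^μ(a) := r(x,a,μ) + β ∑_{y∈X} Q^{reg,*}_{μ,max}(y) p(y|x,a,μ), where Q^{reg,*}_{μ,max}(y) := max_{u∈U} Q^{reg,*}_μ(y,u). Then for all x, x̂ ∈ X and μ, μ̂ ∈ 𝒫(X), ‖q_x^μ − q_{x̂}^{μ̂}‖_∞ = max_{a∈A} |q_x^μ(a) − q_{x̂}^{μ̂}(a)| ≤ K_{H1} (1_{x≠x̂} + ‖μ − μ̂‖₁), where K_{H1} := Q_Lip/(1 − β) and Q_Lip := L1/(1 − βK1/2). (Intermediate claim in the proof of Lemma 4.) -/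
import Mathlib
set_option linter.unusedSectionVars false


namespace MFG

open Finset

def IsProb {E : Type*} [Fintype E] (μ : E → ℝ) : Prop :=
  (∀ e, 0 ≤ μ e) ∧ ∑ e, μ e = 1

def l1 {E : Type*} [Fintype E] (μ ν : E → ℝ) : ℝ :=
  ∑ e, |μ e - ν e|

def ind {E : Type*} [DecidableEq E] (x y : E) : ℝ :=
  if x = y then 0 else 1

def RewardLip {X A : Type*} [Fintype X] [Fintype A] [DecidableEq X] [DecidableEq A]
    (r : X → A → (X → ℝ) → ℝ) (L1 : ℝ) : Prop :=
  ∀ x x' a a' μ μ', IsProb μ → IsProb μ' →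
    |r x a μ - r x' a' μ'| ≤ L1 * (ind x x' + 2 * ind a a' + l1 μ μ')

def KernelLip {X A : Type*} [Fintype X] [Fintype A] [DecidableEq X] [DecidableEq A]
    (p : X → A → (X → ℝ) → X → ℝ) (K1 : ℝ) : Prop :=
  ∀ x x' a a' μ μ', IsProb μ → IsProb μ' →
    l1 (p x a μ) (p x' a' μ') ≤ K1 * (ind x x' + 2 * ind a a' + l1 μ μ')

def IsKernel {X A : Type*} [Fintype X] [Fintype A]
    (p : X → A → (X → ℝ) → X → ℝ) : Prop :=
  ∀ x a μ, IsProb μ → IsProb (p x a μ)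

def RewardNonneg {X A : Type*} [Fintype X] [Fintype A]
    (r : X → A → (X → ℝ) → ℝ) : Prop :=
  ∀ x a μ, IsProb μ → 0 ≤ r x a μ

def OmegaLip {A : Type*} [Fintype A] (Ω : (A → ℝ) → ℝ) (Lreg : ℝ) : Prop :=
  ∀ u v, IsProb u → IsProb v → |Ω u - Ω v| ≤ Lreg * l1 u v

def StrongConvex {A : Type*} [Fintype A] (Ω : (A → ℝ) → ℝ)
    (DΩ : (A → ℝ) → (A → ℝ)) (ρ : ℝ) : Prop :=
  ∀ u v, IsProb u → IsProb v →
    Ω u + (∑ a, DΩ u a * (v a - u a)) + ρ / 2 * (l1 u v) ^ 2 ≤ Ω v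

noncomputable def Tbell {X A : Type*} [Fintype X] [Fintype A]
    (r : X → A → (X → ℝ) → ℝ) (p : X → A → (X → ℝ) → X → ℝ)
    (Ω : (A → ℝ) → ℝ) (β : ℝ) (μ : X → ℝ) (v : X → ℝ) (x : X) : ℝ :=
  ⨆ u : {w : A → ℝ // IsProb w},
    ((∑ a, r x a μ * u.1 a) - Ω u.1 + β * ∑ y, v y * (∑ a, p x a μ y * u.1 a))

noncomputable def Qmax {X A : Type*} [Fintype A] (Q : X → (A → ℝ) → ℝ) (y : X) : ℝ :=
  ⨆ u : {w : A → ℝ // IsProb w}, Q y u.1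

noncomputable def Lbell {X A : Type*} [Fintype X] [Fintype A]
    (r : X → A → (X → ℝ) → ℝ) (p : X → A → (X → ℝ) → X → ℝ)
    (Ω : (A → ℝ) → ℝ) (β : ℝ) (μ : X → ℝ) (Q : X → (A → ℝ) → ℝ)
    (x : X) (u : A → ℝ) : ℝ :=
  (∑ a, r x a μ * u a) - Ω u + β * ∑ y, Qmax Q y * (∑ a, p x a μ y * u a)

def BddFixedPoint {X A : Type*} [Fintype X] [Fintype A]
    (r : X → A → (X → ℝ) → ℝ) (p : X → A → (X → ℝ) → X → ℝ)
    (Ω : (A → ℝ) → ℝ) (β : ℝ) (μ : X → ℝ) (Q : X → (A → ℝ) → ℝ) : Prop :=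
  (∃ C, ∀ x u, IsProb u → |Q x u| ≤ C) ∧
  (∀ x u, IsProb u → Q x u = Lbell r p Ω β μ Q x u)

section Helpers
variable {X A : Type*} [Fintype X] [Fintype A]

lemma l1_nonneg (μ ν : X → ℝ) : 0 ≤ l1 μ ν :=
  Finset.sum_nonneg fun _ _ => abs_nonneg _

lemma l1_self (μ : X → ℝ) : l1 μ μ = 0 := by simp [l1]

lemma ind_nonneg [DecidableEq X] (x y : X) : 0 ≤ ind x y := by
  unfold ind; split <;> norm_num

lemma ind_le_one [DecidableEq X] (x y : X) : ind x y ≤ 1 := by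
  unfold ind; split <;> norm_num

lemma ind_self [DecidableEq X] (x : X) : ind x x = 0 := by simp [ind]

lemma uniform_isProb [Nonempty A] : IsProb (fun _ : A => (Fintype.card A : ℝ)⁻¹) := by
  constructor
  · intro a; positivity
  · rw [Finset.sum_const]
    have h : (Fintype.card A : ℝ) ≠ 0 := by exact_mod_cast Fintype.card_ne_zero
    simp only [Finset.card_univ, nsmul_eq_mul]
    field_simp

lemma probNonempty [Nonempty A] : Nonempty {w : A → ℝ // IsProb w} :=
  ⟨⟨_, uniform_isProb⟩⟩

lemma abs_weighted_le (f w : X → ℝ) (M : ℝ) (hf : ∀ y, |f y| ≤ M)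
    (hw : ∀ y, 0 ≤ w y) (hsum : ∑ y, w y = 1) : |∑ y, f y * w y| ≤ M := by
  calc |∑ y, f y * w y| ≤ ∑ y, |f y * w y| := Finset.abs_sum_le_sum_abs _ _
    _ ≤ ∑ y, M * w y := by
        apply Finset.sum_le_sum; intro y _
        rw [abs_mul, abs_of_nonneg (hw y)]
        exact mul_le_mul_of_nonneg_right (hf y) (hw y)
    _ = M := by rw [← Finset.mul_sum, hsum, mul_one]

lemma span_sum_le [Nonempty X] (f P P' : X → ℝ) (M : ℝ)
    (hf : ∀ y y', |f y - f y'| ≤ M)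
    (hP : ∑ y, P y = 1) (hP' : ∑ y, P' y = 1) :
    |∑ y, f y * (P y - P' y)| ≤ M / 2 * ∑ y, |P y - P' y| := by
  obtain ⟨ymax, -, hmax⟩ := Finset.exists_max_image Finset.univ f
    ⟨Classical.arbitrary X, Finset.mem_univ _⟩
  obtain ⟨ymin, -, hmin⟩ := Finset.exists_min_image Finset.univ f
    ⟨Classical.arbitrary X, Finset.mem_univ _⟩
  have h3 : f ymax - f ymin ≤ M := (le_abs_self _).trans (hf ymax ymin)
  have hc : ∀ y, |f y - (f ymax + f ymin) / 2| ≤ M / 2 := by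
    intro y
    have h1 : f y ≤ f ymax := hmax y (Finset.mem_univ y)
    have h2 : f ymin ≤ f y := hmin y (Finset.mem_univ y)
    rw [abs_le]; constructor <;> linarith
  have h0 : ∑ y, (P y - P' y) = 0 := by rw [Finset.sum_sub_distrib, hP, hP']; ring
  have hshift : ∑ y, f y * (P y - P' y)
      = ∑ y, (f y - (f ymax + f ymin) / 2) * (P y - P' y) := by
    have : ∑ y, f y * (P y - P' y)
        = (∑ y, (f y - (f ymax + f ymin) / 2) * (P y - P' y))
          + ((f ymax + f ymin) / 2) * ∑ y, (P y - P' y) := by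
      rw [Finset.mul_sum, ← Finset.sum_add_distrib]
      apply Finset.sum_congr rfl; intros; ring
    rw [this, h0, mul_zero, add_zero]
  rw [hshift]
  calc |∑ y, (f y - (f ymax + f ymin) / 2) * (P y - P' y)|
      ≤ ∑ y, |(f y - (f ymax + f ymin) / 2) * (P y - P' y)| := Finset.abs_sum_le_sum_abs _ _
    _ ≤ ∑ y, M / 2 * |P y - P' y| := by
        apply Finset.sum_le_sum; intro y _
        rw [abs_mul]
        exact mul_le_mul_of_nonneg_right (hc y) (abs_nonneg _)
    _ = M / 2 * ∑ y, |P y - P' y| := by rw [Finset.mul_sum]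

lemma Qmax_bddAbove [Nonempty A] (Q : X → (A → ℝ) → ℝ) (C : ℝ) (y : X)
    (hC : ∀ u, IsProb u → |Q y u| ≤ C) :
    BddAbove (Set.range fun u : {w : A → ℝ // IsProb w} => Q y u.1) := by
  refine ⟨C, ?_⟩
  rintro _ ⟨u, rfl⟩
  exact (abs_le.mp (hC u.1 u.2)).2

lemma Qmax_sub_le [Nonempty A] (Q Q2 : X → (A → ℝ) → ℝ) (y y' : X) (M : ℝ)
    (h : ∀ u : A → ℝ, IsProb u → Q y u - Q2 y' u ≤ M)
    (hbdd : BddAbove (Set.range fun u : {w : A → ℝ // IsProb w} => Q2 y' u.1)) :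
    Qmax Q y - Qmax Q2 y' ≤ M := by
  have hne : Nonempty {w : A → ℝ // IsProb w} := probNonempty
  rw [sub_le_iff_le_add]
  refine ciSup_le fun u => ?_
  have h1 : Q y u.1 ≤ M + Q2 y' u.1 := by have := h u.1 u.2; linarith
  have h2 : Q2 y' u.1 ≤ Qmax Q2 y' := le_ciSup hbdd u
  linarith

lemma Qmax_abs_sub_le [Nonempty A] (Q Q2 : X → (A → ℝ) → ℝ) (y y' : X) (M : ℝ)
    (h : ∀ u : A → ℝ, IsProb u → |Q y u - Q2 y' u| ≤ M)
    (hbdd1 : BddAbove (Set.range fun u : {w : A → ℝ // IsProb w} => Q y u.1))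
    (hbdd2 : BddAbove (Set.range fun u : {w : A → ℝ // IsProb w} => Q2 y' u.1)) :
    |Qmax Q y - Qmax Q2 y'| ≤ M := by
  rw [abs_le]
  constructor
  · have := Qmax_sub_le Q2 Q y' y M (fun u hu => by
      have := abs_le.mp (h u hu); linarith [this.1]) hbdd1
    linarith
  · exact Qmax_sub_le Q Q2 y y' M (fun u hu => (le_abs_self _).trans (h u hu)) hbdd2

end Helpers

section Mix
variable {X A : Type*} [Fintype X] [Fintype A] [DecidableEq X] [DecidableEq A]

lemma R_diff_le (r : X → A → (X → ℝ) → ℝ) (L1 : ℝ) (hr : RewardLip r L1)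
    (x x' : X) (μ μ' : X → ℝ) (hμ : IsProb μ) (hμ' : IsProb μ')
    (u : A → ℝ) (hu : IsProb u) :
    |(∑ a, r x a μ * u a) - (∑ a, r x' a μ' * u a)| ≤ L1 * (ind x x' + l1 μ μ') := by
  have h1 : ∀ a : A, |r x a μ - r x' a μ'| ≤ L1 * (ind x x' + l1 μ μ') := by
    intro a
    have h := hr x x' a a μ μ' hμ hμ'
    rw [ind_self] at h
    calc |r x a μ - r x' a μ'| ≤ L1 * (ind x x' + 2 * 0 + l1 μ μ') := h
      _ = L1 * (ind x x' + l1 μ μ') := by ring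
  calc |(∑ a, r x a μ * u a) - (∑ a, r x' a μ' * u a)|
      = |∑ a, (r x a μ - r x' a μ') * u a| := by
        rw [← Finset.sum_sub_distrib]
        congr 1; apply Finset.sum_congr rfl; intros; ring
    _ ≤ L1 * (ind x x' + l1 μ μ') :=
        abs_weighted_le _ u _ h1 hu.1 hu.2

lemma P_l1_le (p : X → A → (X → ℝ) → X → ℝ) (K1 : ℝ) (hp : KernelLip p K1)
    (x x' : X) (μ μ' : X → ℝ) (hμ : IsProb μ) (hμ' : IsProb μ')
    (u : A → ℝ) (hu : IsProb u) :
    ∑ y, |(∑ a, p x a μ y * u a) - (∑ a, p x' a μ' y * u a)| ≤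
      K1 * (ind x x' + l1 μ μ') := by
  have h1 : ∀ a : A, l1 (p x a μ) (p x' a μ') ≤ K1 * (ind x x' + l1 μ μ') := by
    intro a
    have h := hp x x' a a μ μ' hμ hμ'
    rw [ind_self] at h
    calc l1 (p x a μ) (p x' a μ') ≤ K1 * (ind x x' + 2 * 0 + l1 μ μ') := h
      _ = K1 * (ind x x' + l1 μ μ') := by ring
  calc ∑ y, |(∑ a, p x a μ y * u a) - (∑ a, p x' a μ' y * u a)|
      = ∑ y, |∑ a, (p x a μ y - p x' a μ' y) * u a| := by
        apply Finset.sum_congr rfl; intro y _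
        rw [← Finset.sum_sub_distrib]
        congr 1; apply Finset.sum_congr rfl; intros; ring
    _ ≤ ∑ y, ∑ a, |p x a μ y - p x' a μ' y| * u a := by
        apply Finset.sum_le_sum; intro y _
        refine (Finset.abs_sum_le_sum_abs _ _).trans ?_
        apply Finset.sum_le_sum; intro a _
        rw [abs_mul, abs_of_nonneg (hu.1 a)]
    _ = ∑ a, (∑ y, |p x a μ y - p x' a μ' y|) * u a := by
        rw [Finset.sum_comm]
        apply Finset.sum_congr rfl; intros; rw [Finset.sum_mul]
    _ ≤ ∑ a, (K1 * (ind x x' + l1 μ μ')) * u a := by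
        apply Finset.sum_le_sum; intro a _
        exact mul_le_mul_of_nonneg_right (h1 a) (hu.1 a)
    _ = K1 * (ind x x' + l1 μ μ') := by rw [← Finset.mul_sum, hu.2, mul_one]

lemma P_nonneg (p : X → A → (X → ℝ) → X → ℝ) (hp_prob : IsKernel p)
    (x : X) (μ : X → ℝ) (hμ : IsProb μ) (u : A → ℝ) (hu : IsProb u) :
    ∀ y, 0 ≤ ∑ a, p x a μ y * u a := fun y =>
  Finset.sum_nonneg fun a _ => mul_nonneg ((hp_prob x a μ hμ).1 y) (hu.1 a)

lemma P_sum_one (p : X → A → (X → ℝ) → X → ℝ) (hp_prob : IsKernel p)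
    (x : X) (μ : X → ℝ) (hμ : IsProb μ) (u : A → ℝ) (hu : IsProb u) :
    ∑ y, ∑ a, p x a μ y * u a = 1 := by
  rw [Finset.sum_comm]
  calc ∑ a, ∑ y, p x a μ y * u a = ∑ a, (∑ y, p x a μ y) * u a := by
        apply Finset.sum_congr rfl; intros; rw [Finset.sum_mul]
    _ = ∑ a, u a := by
        apply Finset.sum_congr rfl; intro a _
        rw [(hp_prob x a μ hμ).2, one_mul]
    _ = 1 := hu.2

end Mix

lemma Q_x_lip {X A : Type*} [Fintype X] [Fintype A] [Nonempty X] [Nonempty A]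
    [DecidableEq X] [DecidableEq A]
    (r : X → A → (X → ℝ) → ℝ) (p : X → A → (X → ℝ) → X → ℝ)
    (L1 K1 : ℝ) (hL1 : 0 ≤ L1) (hK1 : 0 ≤ K1)
    (hr : RewardLip r L1) (hp_prob : IsKernel p) (hp : KernelLip p K1)
    (Ω : (A → ℝ) → ℝ) (β : ℝ) (hβ0 : 0 < β) (hβK : β * K1 / 2 < 1)
    (μ : X → ℝ) (hμ : IsProb μ)
    (Q : X → (A → ℝ) → ℝ) (hQ : BddFixedPoint r p Ω β μ Q) :
    ∀ x x' (u : A → ℝ), IsProb u → |Q x u - Q x' u| ≤ L1 / (1 - β * K1 / 2) := by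
  obtain ⟨⟨C, hC⟩, hfp⟩ := hQ
  have hne : Nonempty {w : A → ℝ // IsProb w} := probNonempty
  set F : X × X × {w : A → ℝ // IsProb w} → ℝ :=
    fun t => |Q t.1 t.2.2.1 - Q t.2.1 t.2.2.1| with hF
  have hbdd : BddAbove (Set.range F) := by
    refine ⟨2 * C, ?_⟩
    rintro _ ⟨⟨a, b, u⟩, rfl⟩
    have h1 := hC a u.1 u.2
    have h2 := hC b u.1 u.2
    have := abs_sub (Q a u.1) (Q b u.1)
    simp only [hF]
    linarith
  set S := sSup (Set.range F) with hSdef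
  have hel : ∀ x x' (u : A → ℝ), IsProb u → |Q x u - Q x' u| ≤ S := by
    intro x x' u hu
    exact le_csSup hbdd ⟨(x, x', ⟨u, hu⟩), rfl⟩
  have hS0 : 0 ≤ S := by
    have := hel (Classical.arbitrary X) (Classical.arbitrary X) _ (uniform_isProb (A := A))
    exact (abs_nonneg _).trans this
  have hQbdd : ∀ y : X, BddAbove (Set.range fun u : {w : A → ℝ // IsProb w} => Q y u.1) :=
    fun y => Qmax_bddAbove Q C y (hC y)
  have hQmaxSpan : ∀ y y', |Qmax Q y - Qmax Q y'| ≤ S := fun y y' =>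
    Qmax_abs_sub_le Q Q y y' S (fun u hu => hel y y' u hu) (hQbdd y) (hQbdd y')
  have hkey : ∀ x x' (u : A → ℝ), IsProb u →
      |Q x u - Q x' u| ≤ L1 + β * K1 / 2 * S := by
    intro x x' u hu
    have e1 := hfp x u hu
    have e2 := hfp x' u hu
    have hdiff : Q x u - Q x' u =
        ((∑ a, r x a μ * u a) - (∑ a, r x' a μ * u a))
        + β * (∑ y, Qmax Q y * ((∑ a, p x a μ y * u a) - (∑ a, p x' a μ y * u a))) := by
      rw [e1, e2]
      unfold Lbell
      have h : ∑ y, Qmax Q y * ((∑ a, p x a μ y * u a) - (∑ a, p x' a μ y * u a))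
          = (∑ y, Qmax Q y * ∑ a, p x a μ y * u a)
            - (∑ y, Qmax Q y * ∑ a, p x' a μ y * u a) := by
        rw [← Finset.sum_sub_distrib]
        apply Finset.sum_congr rfl; intros; ring
      rw [h]; ring
    have hR := R_diff_le r L1 hr x x' μ μ hμ hμ u hu
    rw [l1_self] at hR
    have hP1 := P_l1_le p K1 hp x x' μ μ hμ hμ u hu
    rw [l1_self] at hP1
    have hspan := span_sum_le (Qmax Q) (fun y => ∑ a, p x a μ y * u a)
      (fun y => ∑ a, p x' a μ y * u a) S hQmaxSpan
      (P_sum_one p hp_prob x μ hμ u hu) (P_sum_one p hp_prob x' μ hμ u hu)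
    have hspan2 : |∑ y, Qmax Q y * ((∑ a, p x a μ y * u a) - (∑ a, p x' a μ y * u a))|
        ≤ S / 2 * (K1 * (ind x x' + 0)) := by
      refine hspan.trans ?_
      exact mul_le_mul_of_nonneg_left hP1 (by linarith)
    have habs : |Q x u - Q x' u| ≤
        L1 * (ind x x' + 0) + β * (S / 2 * (K1 * (ind x x' + 0))) := by
      rw [hdiff]
      refine (abs_add_le _ _).trans ?_
      have : |β * (∑ y, Qmax Q y * ((∑ a, p x a μ y * u a) - (∑ a, p x' a μ y * u a)))|
          ≤ β * (S / 2 * (K1 * (ind x x' + 0))) := by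
        rw [abs_mul, abs_of_pos hβ0]
        exact mul_le_mul_of_nonneg_left hspan2 hβ0.le
      linarith [hR, this]
    have hind1 := ind_le_one x x'
    have hind0 := ind_nonneg x x'
    have h1 : L1 * (ind x x' + 0) ≤ L1 := by nlinarith
    have h2 : S / 2 * (K1 * (ind x x' + 0)) ≤ S / 2 * K1 := by
      have he : S / 2 * (K1 * (ind x x' + 0)) = (S / 2 * K1) * ind x x' := by ring
      rw [he]
      exact mul_le_of_le_one_right (by positivity) hind1
    nlinarith [habs, mul_le_mul_of_nonneg_left h2 hβ0.le]
  have hpos : 0 < 1 - β * K1 / 2 := by linarith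
  have hSrange : S ≤ L1 + β * K1 / 2 * S := by
    refine csSup_le (Set.range_nonempty F) ?_
    rintro _ ⟨⟨a, b, u⟩, rfl⟩
    exact hkey a b u.1 u.2
  have hS : S ≤ L1 / (1 - β * K1 / 2) := by
    rw [le_div_iff₀ hpos]
    nlinarith [hSrange]
  intro x x' u hu
  exact (hel x x' u hu).trans hS

lemma Q_mu_lip {X A : Type*} [Fintype X] [Fintype A] [Nonempty X] [Nonempty A]
    [DecidableEq X] [DecidableEq A]
    (r : X → A → (X → ℝ) → ℝ) (p : X → A → (X → ℝ) → X → ℝ)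
    (L1 K1 : ℝ) (hL1 : 0 ≤ L1) (hK1 : 0 ≤ K1)
    (hr : RewardLip r L1) (hp_prob : IsKernel p) (hp : KernelLip p K1)
    (Ω : (A → ℝ) → ℝ) (β : ℝ) (hβ0 : 0 < β) (hβ1 : β < 1) (hβK : β * K1 / 2 < 1)
    (μ μ' : X → ℝ) (hμ : IsProb μ) (hμ' : IsProb μ')
    (Q Q' : X → (A → ℝ) → ℝ)
    (hQ : BddFixedPoint r p Ω β μ Q) (hQ' : BddFixedPoint r p Ω β μ' Q') :
    ∀ x (u : A → ℝ), IsProb u →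
      |Q x u - Q' x u| ≤ (L1 / (1 - β * K1 / 2)) / (1 - β) * l1 μ μ' := by
  have hQ'span := Q_x_lip r p L1 K1 hL1 hK1 hr hp_prob hp Ω β hβ0 hβK μ' hμ' Q' hQ'
  obtain ⟨⟨C, hC⟩, hfp⟩ := hQ
  obtain ⟨⟨C', hC'⟩, hfp'⟩ := hQ'
  have hne : Nonempty {w : A → ℝ // IsProb w} := probNonempty
  set QL := L1 / (1 - β * K1 / 2) with hQLdef
  have hpos : 0 < 1 - β * K1 / 2 := by linarith
  have hpos1 : 0 < 1 - β := by linarith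
  have hQL0 : 0 ≤ QL := div_nonneg hL1 hpos.le
  have hQbdd : ∀ y : X, BddAbove (Set.range fun u : {w : A → ℝ // IsProb w} => Q y u.1) :=
    fun y => Qmax_bddAbove Q C y (hC y)
  have hQ'bdd : ∀ y : X, BddAbove (Set.range fun u : {w : A → ℝ // IsProb w} => Q' y u.1) :=
    fun y => Qmax_bddAbove Q' C' y (hC' y)
  have hQ'maxSpan : ∀ y y', |Qmax Q' y - Qmax Q' y'| ≤ QL := fun y y' =>
    Qmax_abs_sub_le Q' Q' y y' QL (fun u hu => hQ'span y y' u hu) (hQ'bdd y) (hQ'bdd y')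
  set F : X × {w : A → ℝ // IsProb w} → ℝ :=
    fun t => |Q t.1 t.2.1 - Q' t.1 t.2.1| with hF
  have hbdd : BddAbove (Set.range F) := by
    refine ⟨C + C', ?_⟩
    rintro _ ⟨⟨a, u⟩, rfl⟩
    have h1 := hC a u.1 u.2
    have h2 := hC' a u.1 u.2
    have := abs_sub (Q a u.1) (Q' a u.1)
    simp only [hF]
    linarith
  set D := sSup (Set.range F) with hDdef
  have hel : ∀ x (u : A → ℝ), IsProb u → |Q x u - Q' x u| ≤ D := by
    intro x u hu
    exact le_csSup hbdd ⟨(x, ⟨u, hu⟩), rfl⟩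
  have hD0 : 0 ≤ D := by
    have := hel (Classical.arbitrary X) _ (uniform_isProb (A := A))
    exact (abs_nonneg _).trans this
  have hQmaxD : ∀ y, |Qmax Q y - Qmax Q' y| ≤ D := fun y =>
    Qmax_abs_sub_le Q Q' y y D (fun u hu => hel y u hu) (hQbdd y) (hQ'bdd y)
  have hkey : ∀ x (u : A → ℝ), IsProb u →
      |Q x u - Q' x u| ≤ L1 * l1 μ μ' + β * D + β * (QL / 2 * (K1 * l1 μ μ')) := by
    intro x u hu
    have e1 := hfp x u hu
    have e2 := hfp' x u hu
    have hdiff : Q x u - Q' x u =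
        ((∑ a, r x a μ * u a) - (∑ a, r x a μ' * u a))
        + β * (∑ y, (Qmax Q y - Qmax Q' y) * (∑ a, p x a μ y * u a))
        + β * (∑ y, Qmax Q' y * ((∑ a, p x a μ y * u a) - (∑ a, p x a μ' y * u a))) := by
      rw [e1, e2]
      unfold Lbell
      have h : (∑ y, (Qmax Q y - Qmax Q' y) * (∑ a, p x a μ y * u a))
            + (∑ y, Qmax Q' y * ((∑ a, p x a μ y * u a) - (∑ a, p x a μ' y * u a)))
          = (∑ y, Qmax Q y * ∑ a, p x a μ y * u a)
            - (∑ y, Qmax Q' y * ∑ a, p x a μ' y * u a) := by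
        rw [← Finset.sum_add_distrib, ← Finset.sum_sub_distrib]
        apply Finset.sum_congr rfl; intros; ring
      have h2 : β * (∑ y, (Qmax Q y - Qmax Q' y) * (∑ a, p x a μ y * u a))
            + β * (∑ y, Qmax Q' y * ((∑ a, p x a μ y * u a) - (∑ a, p x a μ' y * u a)))
          = β * ((∑ y, Qmax Q y * ∑ a, p x a μ y * u a)
            - (∑ y, Qmax Q' y * ∑ a, p x a μ' y * u a)) := by
        rw [← mul_add, h]
      rw [add_assoc, h2]; ring
    have hR := R_diff_le r L1 hr x x μ μ' hμ hμ' u hu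
    rw [ind_self, zero_add] at hR
    have hP1 := P_l1_le p K1 hp x x μ μ' hμ hμ' u hu
    rw [ind_self, zero_add] at hP1
    have hmid : |∑ y, (Qmax Q y - Qmax Q' y) * (∑ a, p x a μ y * u a)| ≤ D :=
      abs_weighted_le _ _ D hQmaxD (P_nonneg p hp_prob x μ hμ u hu)
        (P_sum_one p hp_prob x μ hμ u hu)
    have hspan := span_sum_le (Qmax Q') (fun y => ∑ a, p x a μ y * u a)
      (fun y => ∑ a, p x a μ' y * u a) QL hQ'maxSpan
      (P_sum_one p hp_prob x μ hμ u hu) (P_sum_one p hp_prob x μ' hμ' u hu)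
    have hspan2 : |∑ y, Qmax Q' y * ((∑ a, p x a μ y * u a) - (∑ a, p x a μ' y * u a))|
        ≤ QL / 2 * (K1 * l1 μ μ') := by
      refine hspan.trans ?_
      exact mul_le_mul_of_nonneg_left hP1 (by positivity)
    rw [hdiff]
    refine ((abs_add_le _ _).trans ?_)
    have t1 : |(∑ a, r x a μ * u a) - (∑ a, r x a μ' * u a)
        + β * (∑ y, (Qmax Q y - Qmax Q' y) * (∑ a, p x a μ y * u a))|
        ≤ L1 * l1 μ μ' + β * D := by
      refine (abs_add_le _ _).trans ?_
      have : |β * (∑ y, (Qmax Q y - Qmax Q' y) * (∑ a, p x a μ y * u a))| ≤ β * D := by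
        rw [abs_mul, abs_of_pos hβ0]
        exact mul_le_mul_of_nonneg_left hmid hβ0.le
      linarith [hR]
    have t2 : |β * (∑ y, Qmax Q' y * ((∑ a, p x a μ y * u a) - (∑ a, p x a μ' y * u a)))|
        ≤ β * (QL / 2 * (K1 * l1 μ μ')) := by
      rw [abs_mul, abs_of_pos hβ0]
      exact mul_le_mul_of_nonneg_left hspan2 hβ0.le
    linarith
  have hDle : D ≤ L1 * l1 μ μ' + β * D + β * (QL / 2 * (K1 * l1 μ μ')) := by
    refine csSup_le (Set.range_nonempty F) ?_
    rintro _ ⟨⟨a, u⟩, rfl⟩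
    exact hkey a u.1 u.2
  have hQLeq : QL * (1 - β * K1 / 2) = L1 := by
    rw [hQLdef, div_mul_cancel₀ _ hpos.ne']
  have hD : D ≤ QL / (1 - β) * l1 μ μ' := by
    have heq : L1 * l1 μ μ' + β * (QL / 2 * (K1 * l1 μ μ')) = QL * l1 μ μ' := by
      rw [← hQLeq]; ring
    have h2 : D - β * D ≤ QL * l1 μ μ' := by linarith [hDle]
    rw [div_mul_eq_mul_div, le_div_iff₀ hpos1]
    calc D * (1 - β) = D - β * D := by ring
      _ ≤ QL * l1 μ μ' := h2
  intro x u hu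
  exact (hel x u hu).trans hD

/-- Lipschitz bound for `q_x^μ` (intermediate claim
in the proof of Lemma 4). -/
theorem statement8 {X A : Type*} [Fintype X] [Fintype A] [Nonempty X] [Nonempty A]
    [DecidableEq X] [DecidableEq A]
    (r : X → A → (X → ℝ) → ℝ) (p : X → A → (X → ℝ) → X → ℝ)
    (L1 K1 : ℝ) (hL1 : 0 ≤ L1) (hK1 : 0 ≤ K1)
    (hr_nonneg : RewardNonneg r) (hr : RewardLip r L1)
    (hp_prob : IsKernel p) (hp : KernelLip p K1)
    (Ω : (A → ℝ) → ℝ) (hΩ : ContinuousOn Ω {u | IsProb u})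
    (β : ℝ) (hβ0 : 0 < β) (hβ1 : β < 1) (hβK : β * K1 / 2 < 1)
    (μ μ' : X → ℝ) (hμ : IsProb μ) (hμ' : IsProb μ')
    (Q Q' : X → (A → ℝ) → ℝ)
    (hQ : BddFixedPoint r p Ω β μ Q) (hQ' : BddFixedPoint r p Ω β μ' Q')
    (x x' : X) :
    ∀ a : A,
      |(r x a μ + β * ∑ y, Qmax Q y * p x a μ y) -
        (r x' a μ' + β * ∑ y, Qmax Q' y * p x' a μ' y)| ≤
      (L1 / (1 - β * K1 / 2)) / (1 - β) * (ind x x' + l1 μ μ') := by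
  intro a
  have hQ'spanU := Q_x_lip r p L1 K1 hL1 hK1 hr hp_prob hp Ω β hβ0 hβK μ' hμ' Q' hQ'
  have hmu := Q_mu_lip r p L1 K1 hL1 hK1 hr hp_prob hp Ω β hβ0 hβ1 hβK μ μ' hμ hμ' Q Q' hQ hQ'
  obtain ⟨C, hC⟩ := hQ.1
  obtain ⟨C', hC'⟩ := hQ'.1
  have hpos : 0 < 1 - β * K1 / 2 := by linarith
  have hpos1 : 0 < 1 - β := by linarith
  obtain ⟨QL, hQLdef⟩ : ∃ t : ℝ, t = L1 / (1 - β * K1 / 2) := ⟨_, rfl⟩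
  obtain ⟨KH, hKHdef⟩ : ∃ t : ℝ, t = QL / (1 - β) := ⟨_, rfl⟩
  rw [← hQLdef] at hQ'spanU
  rw [show (L1 / (1 - β * K1 / 2)) / (1 - β) = KH by rw [hKHdef, hQLdef]] at hmu ⊢
  have hQL0 : 0 ≤ QL := hQLdef ▸ div_nonneg hL1 hpos.le
  have hKH0 : 0 ≤ KH := hKHdef ▸ div_nonneg hQL0 hpos1.le
  have hQLeq : QL * (1 - β * K1 / 2) = L1 := by
    rw [hQLdef, div_mul_cancel₀ _ hpos.ne']
  have hKHeq : KH * (1 - β) = QL := by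
    rw [hKHdef, div_mul_cancel₀ _ hpos1.ne']
  have hQbdd : ∀ y : X, BddAbove (Set.range fun u : {w : A → ℝ // IsProb w} => Q y u.1) :=
    fun y => Qmax_bddAbove Q C y (hC y)
  have hQ'bdd : ∀ y : X, BddAbove (Set.range fun u : {w : A → ℝ // IsProb w} => Q' y u.1) :=
    fun y => Qmax_bddAbove Q' C' y (hC' y)
  have hQmaxD : ∀ y, |Qmax Q y - Qmax Q' y| ≤ KH * l1 μ μ' := fun y =>
    Qmax_abs_sub_le Q Q' y y _ (fun u hu => hmu y u hu) (hQbdd y) (hQ'bdd y)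
  have hQ'maxSpan : ∀ y y', |Qmax Q' y - Qmax Q' y'| ≤ QL := fun y y' =>
    Qmax_abs_sub_le Q' Q' y y' QL (fun u hu => hQ'spanU y y' u hu) (hQ'bdd y) (hQ'bdd y')
  obtain ⟨d, hddef⟩ : ∃ t : ℝ, t = ind x x' + l1 μ μ' := ⟨_, rfl⟩
  rw [show ind x x' + l1 μ μ' = d from hddef.symm]
  have hd : l1 μ μ' ≤ d := by
    rw [hddef]; linarith [ind_nonneg x x']
  have hdiff : (r x a μ + β * ∑ y, Qmax Q y * p x a μ y) -
        (r x' a μ' + β * ∑ y, Qmax Q' y * p x' a μ' y)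
      = (r x a μ - r x' a μ')
        + β * (∑ y, (Qmax Q y - Qmax Q' y) * p x a μ y)
        + β * (∑ y, Qmax Q' y * (p x a μ y - p x' a μ' y)) := by
    have h : (∑ y, (Qmax Q y - Qmax Q' y) * p x a μ y)
          + (∑ y, Qmax Q' y * (p x a μ y - p x' a μ' y))
        = (∑ y, Qmax Q y * p x a μ y) - (∑ y, Qmax Q' y * p x' a μ' y) := by
      rw [← Finset.sum_add_distrib, ← Finset.sum_sub_distrib]
      apply Finset.sum_congr rfl; intros; ring
    calc (r x a μ + β * ∑ y, Qmax Q y * p x a μ y) -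
        (r x' a μ' + β * ∑ y, Qmax Q' y * p x' a μ' y)
        = (r x a μ - r x' a μ')
          + β * ((∑ y, Qmax Q y * p x a μ y) - (∑ y, Qmax Q' y * p x' a μ' y)) := by ring
      _ = (r x a μ - r x' a μ')
          + β * ((∑ y, (Qmax Q y - Qmax Q' y) * p x a μ y)
            + (∑ y, Qmax Q' y * (p x a μ y - p x' a μ' y))) := by rw [h]
      _ = _ := by ring
  have hr1 : |r x a μ - r x' a μ'| ≤ L1 * d := by
    have h := hr x x' a a μ μ' hμ hμ'
    rw [ind_self] at h
    have he : L1 * (ind x x' + 2 * 0 + l1 μ μ') = L1 * d := by rw [hddef]; ring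
    linarith [h, he.le]
  have hmid : |∑ y, (Qmax Q y - Qmax Q' y) * p x a μ y| ≤ KH * l1 μ μ' :=
    abs_weighted_le _ _ _ hQmaxD (hp_prob x a μ hμ).1 (hp_prob x a μ hμ).2
  have hl1p : ∑ y, |p x a μ y - p x' a μ' y| ≤ K1 * d := by
    have h := hp x x' a a μ μ' hμ hμ'
    rw [ind_self] at h
    have he : K1 * (ind x x' + 2 * 0 + l1 μ μ') = K1 * d := by rw [hddef]; ring
    have hl : l1 (p x a μ) (p x' a μ') = ∑ y, |p x a μ y - p x' a μ' y| := rfl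
    rw [hl] at h
    linarith [h, he.le]
  have hspan := span_sum_le (Qmax Q') (p x a μ) (p x' a μ') QL hQ'maxSpan
    (hp_prob x a μ hμ).2 (hp_prob x' a μ' hμ').2
  have hspan2 : |∑ y, Qmax Q' y * (p x a μ y - p x' a μ' y)| ≤ QL / 2 * (K1 * d) :=
    hspan.trans (mul_le_mul_of_nonneg_left hl1p (by positivity))
  have habs : |(r x a μ + β * ∑ y, Qmax Q y * p x a μ y) -
        (r x' a μ' + β * ∑ y, Qmax Q' y * p x' a μ' y)|
      ≤ L1 * d + β * (KH * l1 μ μ') + β * (QL / 2 * (K1 * d)) := by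
    rw [hdiff]
    refine (abs_add_le _ _).trans ?_
    have t1 : |(r x a μ - r x' a μ')
        + β * (∑ y, (Qmax Q y - Qmax Q' y) * p x a μ y)|
        ≤ L1 * d + β * (KH * l1 μ μ') := by
      refine (abs_add_le _ _).trans ?_
      have : |β * (∑ y, (Qmax Q y - Qmax Q' y) * p x a μ y)| ≤ β * (KH * l1 μ μ') := by
        rw [abs_mul, abs_of_pos hβ0]
        exact mul_le_mul_of_nonneg_left hmid hβ0.le
      linarith [hr1]
    have t2 : |β * (∑ y, Qmax Q' y * (p x a μ y - p x' a μ' y))|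
        ≤ β * (QL / 2 * (K1 * d)) := by
      rw [abs_mul, abs_of_pos hβ0]
      exact mul_le_mul_of_nonneg_left hspan2 hβ0.le
    linarith
  have key : L1 * d + β * (QL / 2 * (K1 * d)) = QL * d := by
    rw [← hQLeq]; ring
  have key2 : QL * d + β * (KH * d) = KH * d := by
    rw [← hKHeq]; ring
  have h3 : β * (KH * l1 μ μ') ≤ β * (KH * d) :=
    mul_le_mul_of_nonneg_left (mul_le_mul_of_nonneg_left hd hKH0) hβ0.le
  linarith [habs, key, key2, h3]


end MFG
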